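/- arXiv:2202.12511 — 10 statements merged into one kernel-verified Lean document; each statement's English description precedes it below -/
import Mathlib

section
/- Let $x$ be a real random variable with $\mathbb{E}(x)=0$ and $0<\mathrm{Var}(x)<\infty$. Fix $\widetilde{z}\in(-1,1)$, set $t=\inf\{s: \Pr(x\le s)\ge (1-\widetilde z)/2\}$, and let $p_{\widetilde z}:\mathbb{R}\to[0,1]$ be a measurable function with $p_{\widetilde z}(x)=1$ for $x>t$, $p_{\widetilde z}(x)=0$ for $x<t$, and $\mathbb{E}(p_{\widetilde z}(x))=(1+\widetilde z)/2$. Then for every measurable $p:\mathbb{R}\to[0,1]$ with $\mathbb{E}(p(x))=(1+\widetilde z)/2$, one has $\mathbb{E}(x\,p(x)) \le \mathbb{E}(x\,p_{\widetilde z}(x))$. -/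
open MeasureTheory Set

/-- The generalized RDD maximizes the short-term gain `E(x p(x))`
among all designs with the given treated fraction. -/
theorem stmt1 (μ : Measure ℝ) [IsProbabilityMeasure μ]
    (hmean : ∫ x, x ∂μ = 0)
    (hint2 : Integrable (fun x : ℝ => x^2) μ)
    (hvar : 0 < ∫ x, x^2 ∂μ)
    (zt : ℝ) (hz : zt ∈ Ioo (-1:ℝ) 1)
    (t : ℝ) (ht : t = sInf {s : ℝ | (1 - zt)/2 ≤ (μ (Iic s)).toReal})
    (prdd : ℝ → ℝ) (hm : Measurable prdd) (h01 : ∀ x, prdd x ∈ Icc (0:ℝ) 1)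
    (hgt : ∀ x, t < x → prdd x = 1) (hlt : ∀ x, x < t → prdd x = 0)
    (hfrac : ∫ x, prdd x ∂μ = (1 + zt)/2) :
    ∀ p : ℝ → ℝ, Measurable p → (∀ x, p x ∈ Icc (0:ℝ) 1) →
      ∫ x, p x ∂μ = (1 + zt)/2 →
      ∫ x, x * p x ∂μ ≤ ∫ x, x * prdd x ∂μ := by
  intro p hpm hp01 hpfrac
  have hxint : Integrable (fun x : ℝ => x) μ := by
    refine (hint2.add (integrable_const 1)).mono'
      measurable_id.aestronglyMeasurable (ae_of_all _ fun x => ?_)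
    have : |x| ≤ x ^ 2 + 1 := by nlinarith [sq_nonneg (|x| - 1), sq_abs x, abs_nonneg x]
    simpa using this
  have hbd : ∀ q : ℝ → ℝ, Measurable q → (∀ x, q x ∈ Icc (0:ℝ) 1) →
      Integrable (fun x => x * q x) μ := by
    intro q hqm hq01
    refine hxint.abs.mono' (measurable_id.mul hqm).aestronglyMeasurable
      (ae_of_all _ fun x => ?_)
    have h0 := (hq01 x).1; have h1 := (hq01 x).2
    have : |x * q x| ≤ |x| := by
      rw [abs_mul]
      calc |x| * |q x| ≤ |x| * 1 := by
            refine mul_le_mul_of_nonneg_left ?_ (abs_nonneg x)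
            rw [abs_of_nonneg h0]; exact h1
        _ = |x| := mul_one _
    simpa [abs_mul] using this
  have hqint : ∀ q : ℝ → ℝ, Measurable q → (∀ x, q x ∈ Icc (0:ℝ) 1) →
      Integrable q μ := by
    intro q hqm hq01
    refine (integrable_const (1:ℝ)).mono' hqm.aestronglyMeasurable
      (ae_of_all _ fun x => ?_)
    have h0 := (hq01 x).1; have h1 := (hq01 x).2
    simpa [abs_of_nonneg h0] using h1
  have hPint := hqint prdd hm h01
  have hpint := hqint p hpm hp01
  have hxP := hbd prdd hm h01
  have hxp := hbd p hpm hp01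
  have hnn : 0 ≤ ∫ x, (x - t) * (prdd x - p x) ∂μ := by
    refine integral_nonneg fun x => ?_
    show (0:ℝ) ≤ (x - t) * (prdd x - p x)
    rcases lt_trichotomy x t with h | h | h
    · have h0 := hlt x h; have h1 := (hp01 x).1; rw [h0]; nlinarith
    · simp [h]
    · have h0 := hgt x h; have h1 := (hp01 x).2; rw [h0]; nlinarith
  have hsplit : ∫ x, (x - t) * (prdd x - p x) ∂μ
      = (∫ x, x * prdd x ∂μ - ∫ x, x * p x ∂μ)
        - t * (∫ x, prdd x ∂μ - ∫ x, p x ∂μ) := by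
    have h1 : (fun x => (x - t) * (prdd x - p x))
        = fun x => (x * prdd x - x * p x) - t * (prdd x - p x) := by
      funext x; ring
    have hA : Integrable (fun x => x * prdd x - x * p x) μ := hxP.sub hxp
    have hB : Integrable (fun x => t * (prdd x - p x)) μ := (hPint.sub hpint).const_mul t
    have hC : Integrable (fun x => prdd x - p x) μ := hPint.sub hpint
    rw [h1, integral_sub hA hB, integral_sub hxP hxp, integral_const_mul, integral_sub hPint hpint]
  rw [hsplit, hfrac, hpfrac] at hnn
  linarith
end

section
/- Under the setup of the generalized RDD optimality: if a measurable $p:\mathbb{R}\to[0,1]$ satisfies $\mathbb{E}(p(x))=(1+\widetilde z)/2$ and $\mathbb{E}(x\,p(x)) = \mathbb{E}(x\,p_{\widetilde z}(x))$, then $p(x)=p_{\widetilde z}(x)$ almost surely under the law of $x$. -/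
open MeasureTheory Set

/-!
Put `g x = (x - t) * (prdd x - p x)`. Since `prdd` jumps from `0` to `1` at `t` and `0 ≤ p ≤ 1`,
`g ≥ 0` everywhere, while the two moment conditions give `∫ g = 0`; hence `p = prdd` almost
everywhere off `{t}`. On the atom `{t}` itself, the equality of the means `∫ p = ∫ prdd` forces
`μ {t} * (p t - prdd t) = 0`.
-/

lemma norm_le_one_of_mem_Icc {a : ℝ} (h : a ∈ Icc (0 : ℝ) 1) : ‖a‖ ≤ 1 := by
  rw [Real.norm_of_nonneg h.1]
  exact h.2

lemma integrable_of_forall_mem_Icc {α : Type*} [MeasurableSpace α] {μ : Measure α}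
    [IsFiniteMeasure μ] {f : α → ℝ} (hf : Measurable f) (h01 : ∀ x, f x ∈ Icc (0 : ℝ) 1) :
    Integrable f μ :=
  Integrable.of_bound hf.aestronglyMeasurable 1
    (ae_of_all _ fun x => norm_le_one_of_mem_Icc (h01 x))

lemma sub_mul_sub_nonneg_of_threshold {t x a b : ℝ} (ha : a ∈ Icc (0 : ℝ) 1)
    (hgt : t < x → b = 1) (hlt : x < t → b = 0) : 0 ≤ (x - t) * (b - a) := by
  rcases lt_trichotomy x t with h | rfl | h
  · rw [hlt h]
    exact mul_nonneg_of_nonpos_of_nonpos (by linarith) (by linarith [ha.1])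
  · simp
  · rw [hgt h]
    exact mul_nonneg (by linarith) (by linarith [ha.2])

lemma ae_eq_of_ae_eq_off_singleton_of_integral_eq {α : Type*} [MeasurableSpace α]
    [MeasurableSingletonClass α] {μ : Measure α} [IsFiniteMeasure μ] {p q : α → ℝ} {t : α}
    (hp : Integrable p μ) (hq : Integrable q μ) (h : ∀ᵐ x ∂μ, x = t ∨ p x = q x)
    (hint : ∫ x, p x ∂μ = ∫ x, q x ∂μ) : p =ᵐ[μ] q := by
  have hind : (fun x => p x - q x) =ᵐ[μ] ({t} : Set α).indicator fun _ => p t - q t := by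
    filter_upwards [h] with x hx
    rcases hx with rfl | hx
    · simp
    · by_cases hxt : x = t
      · simp [hxt]
      · simp [hx, hxt]
  have hatom : μ.real {t} * (p t - q t) = 0 := by
    rw [← smul_eq_mul, ← integral_indicator_const _ (measurableSet_singleton t),
      ← integral_congr_ae hind, integral_sub hp hq, hint, sub_self]
  rcases mul_eq_zero.1 hatom with hzero | hpt
  · have hne : ∀ᵐ x ∂μ, x ≠ t :=
      measure_eq_zero_iff_ae_notMem.1 ((measureReal_eq_zero_iff).1 hzero)
    filter_upwards [h, hne] with x hx hxt
    exact hx.resolve_left hxt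
  · filter_upwards [h] with x hx
    rcases hx with rfl | hx
    · exact sub_eq_zero.1 hpt
    · exact hx

theorem ae_eq_threshold_of_integral_eq_of_integral_mul_eq {μ : Measure ℝ} [IsFiniteMeasure μ]
    (hx : Integrable (fun x => x) μ) {t : ℝ} {p q : ℝ → ℝ} (hp : Measurable p)
    (hq : Measurable q) (hp01 : ∀ x, p x ∈ Icc (0 : ℝ) 1) (hq01 : ∀ x, q x ∈ Icc (0 : ℝ) 1)
    (hgt : ∀ x, t < x → q x = 1) (hlt : ∀ x, x < t → q x = 0)
    (hmean : ∫ x, p x ∂μ = ∫ x, q x ∂μ) (hmoment : ∫ x, x * p x ∂μ = ∫ x, x * q x ∂μ) :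
    p =ᵐ[μ] q := by
  have hpi : Integrable p μ := integrable_of_forall_mem_Icc hp hp01
  have hqi : Integrable q μ := integrable_of_forall_mem_Icc hq hq01
  have hxp : Integrable (fun x => x * p x) μ :=
    hx.mul_bdd hpi.1 (ae_of_all _ fun x => norm_le_one_of_mem_Icc (hp01 x))
  have hxq : Integrable (fun x => x * q x) μ :=
    hx.mul_bdd hqi.1 (ae_of_all _ fun x => norm_le_one_of_mem_Icc (hq01 x))
  have hmoment_diff : Integrable (fun x => x * q x - x * p x) μ := hxq.sub hxp
  have hmean_diff : Integrable (fun x => t * (q x - p x)) μ := (hqi.sub hpi).const_mul t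
  have hg_eq : (fun x => (x - t) * (q x - p x))
      = fun x => (x * q x - x * p x) - t * (q x - p x) := by
    ext x
    ring
  have hg_int : Integrable (fun x => (x - t) * (q x - p x)) μ := by
    rw [hg_eq]
    exact hmoment_diff.sub hmean_diff
  have hg_zero : ∫ x, (x - t) * (q x - p x) ∂μ = 0 := by
    rw [hg_eq, integral_sub hmoment_diff hmean_diff, integral_sub hxq hxp, integral_const_mul,
      integral_sub hqi hpi, hmean, hmoment]
    ring
  have hg_ae := (integral_eq_zero_iff_of_nonneg
    (fun x => sub_mul_sub_nonneg_of_threshold (hp01 x) (hgt x) (hlt x)) hg_int).1 hg_zero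
  refine ae_eq_of_ae_eq_off_singleton_of_integral_eq (t := t) hpi hqi ?_ hmean
  filter_upwards [hg_ae] with x hx
  rcases mul_eq_zero.1 hx with h | h
  · exact Or.inl (sub_eq_zero.1 h)
  · exact Or.inr (sub_eq_zero.1 h).symm

theorem stmt2_general (μ : Measure ℝ) [IsProbabilityMeasure μ]
    (hint2 : Integrable (fun x : ℝ => x^2) μ)
    (zt : ℝ)
    (t : ℝ)
    (prdd : ℝ → ℝ) (hm : Measurable prdd) (h01 : ∀ x, prdd x ∈ Icc (0:ℝ) 1)
    (hgt : ∀ x, t < x → prdd x = 1) (hlt : ∀ x, x < t → prdd x = 0)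
    (hfrac : ∫ x, prdd x ∂μ = (1 + zt)/2)
    (p : ℝ → ℝ) (hpm : Measurable p) (hp01 : ∀ x, p x ∈ Icc (0:ℝ) 1)
    (hpfrac : ∫ x, p x ∂μ = (1 + zt)/2)
    (hpgain : ∫ x, x * p x ∂μ = ∫ x, x * prdd x ∂μ) :
    p =ᵐ[μ] prdd := by
  have hx : Integrable (fun x : ℝ => x) μ :=
    ((memLp_two_iff_integrable_sq aestronglyMeasurable_id).2 hint2).integrable one_le_two
  exact ae_eq_threshold_of_integral_eq_of_integral_mul_eq hx hpm hm hp01 h01 hgt hlt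
    (hpfrac.trans hfrac.symm) hpgain

/-- If a feasible design attains the maximal short-term gain of the
generalized RDD, it equals the generalized RDD almost surely. -/
theorem stmt2 (μ : Measure ℝ) [IsProbabilityMeasure μ]
    (hmean : ∫ x, x ∂μ = 0)
    (hint2 : Integrable (fun x : ℝ => x^2) μ)
    (hvar : 0 < ∫ x, x^2 ∂μ)
    (zt : ℝ) (hz : zt ∈ Ioo (-1:ℝ) 1)
    (t : ℝ) (ht : t = sInf {s : ℝ | (1 - zt)/2 ≤ (μ (Iic s)).toReal})
    (prdd : ℝ → ℝ) (hm : Measurable prdd) (h01 : ∀ x, prdd x ∈ Icc (0:ℝ) 1)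
    (hgt : ∀ x, t < x → prdd x = 1) (hlt : ∀ x, x < t → prdd x = 0)
    (hfrac : ∫ x, prdd x ∂μ = (1 + zt)/2)
    (p : ℝ → ℝ) (hpm : Measurable p) (hp01 : ∀ x, p x ∈ Icc (0:ℝ) 1)
    (hpfrac : ∫ x, p x ∂μ = (1 + zt)/2)
    (hpgain : ∫ x, x * p x ∂μ = ∫ x, x * prdd x ∂μ) :
    p =ᵐ[μ] prdd :=
  stmt2_general μ hint2 zt t prdd hm h01 hgt hlt hfrac p hpm hp01 hpfrac hpgain
end

section
/- Let $x$ have finite second moment and let $\mathcal{F}$ be the set of nondecreasing measurable functions $\mathbb{R}\to[0,1]$. Then the set $S' = \{(\mathbb{E}(p(x)), \mathbb{E}(x\,p(x)), \mathbb{E}(x^2 p(x))) : p\in\mathcal{F}\} \subseteq \mathbb{R}^3$ is closed and convex. -/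
open MeasureTheory Set

open Filter Topology


lemma stmt8_int {μ : Measure ℝ} [IsProbabilityMeasure μ]
    (hint2 : Integrable (fun x : ℝ => x^2) μ) {p : ℝ → ℝ}
    (hm : Monotone p) (hb : ∀ x, p x ∈ Icc (0:ℝ) 1) :
    Integrable p μ ∧ Integrable (fun x => x * p x) μ ∧
      Integrable (fun x => x^2 * p x) μ := by
  have hmeas : Measurable p := hm.measurable
  have habs : ∀ x, |p x| ≤ 1 := fun x => abs_le.2 ⟨by linarith [(hb x).1], (hb x).2⟩
  refine ⟨?_, ?_, ?_⟩
  · exact (integrable_const (1:ℝ)).mono' hmeas.aestronglyMeasurable (ae_of_all _ habs)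
  · have hx : Integrable (fun x : ℝ => 1 + x^2) μ := (integrable_const 1).add hint2
    refine hx.mono' (measurable_id.mul hmeas).aestronglyMeasurable (ae_of_all _ fun x => ?_)
    have h1 : |x * p x| ≤ |x| := by
      rw [abs_mul]
      nlinarith [abs_nonneg x, habs x, abs_nonneg (p x)]
    have h2 : |x| ≤ 1 + x^2 := by nlinarith [sq_abs x, sq_nonneg (|x| - 1)]
    calc ‖x * p x‖ = |x * p x| := rfl
      _ ≤ 1 + x^2 := h1.trans h2
  · refine hint2.mono' ((measurable_id.pow_const 2).mul hmeas).aestronglyMeasurable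
      (ae_of_all _ fun x => ?_)
    have : |x^2 * p x| ≤ x^2 := by
      rw [abs_mul, abs_of_nonneg (sq_nonneg x)]
      nlinarith [sq_nonneg x, habs x, abs_nonneg (p x)]
    exact this

lemma stmt8_helly (p : ℕ → ℝ → ℝ) (hm : ∀ n, Monotone (p n))
    (hb : ∀ n x, p n x ∈ Icc (0:ℝ) 1)
    (D : Set ℝ) (hDc : D.Countable)
    (hDd : ∀ x y : ℝ, x < y → ∃ d ∈ D, x < d ∧ d < y) :
    ∃ (q : ℝ → ℝ) (φ : ℕ → ℕ) (E : Set ℝ), StrictMono φ ∧ Monotone q ∧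
      (∀ x, q x ∈ Icc (0:ℝ) 1) ∧ E.Countable ∧ (∀ x ∈ E, x ∉ D) ∧
      (∀ x ∉ E, Tendsto (fun k => p (φ k) x) atTop (𝓝 (q x))) := by
  classical
  haveI := hDc.to_subtype
  set F : ℕ → (D → Icc (0:ℝ) 1) := fun n d => ⟨p n d, hb n d⟩ with hF
  obtain ⟨G, φ, hφ, hconv⟩ := CompactSpace.tendsto_subseq F
  set g : D → ℝ := fun d => (G d : ℝ) with hgdef
  have hGd : ∀ d : D, Tendsto (fun k => p (φ k) d) atTop (𝓝 (g d)) := by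
    intro d
    have h1 : Tendsto (fun k => (F ∘ φ) k d) atTop (𝓝 (G d)) :=
      ((continuous_apply d).tendsto G).comp hconv
    exact (continuous_subtype_val.tendsto (G d)).comp h1
  have hg01 : ∀ d, g d ∈ Icc (0:ℝ) 1 := fun d => (G d).2
  have hgmono : ∀ d e : D, (d:ℝ) ≤ (e:ℝ) → g d ≤ g e := fun d e h =>
    le_of_tendsto_of_tendsto' (hGd d) (hGd e) (fun k => hm _ h)
  -- the sets below/above
  have hne : ∀ x : ℝ, (g '' {d : D | (d:ℝ) < x}).Nonempty := by
    intro x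
    obtain ⟨d, hdD, _, hdx⟩ := hDd (x-1) x (by linarith)
    exact ⟨g ⟨d, hdD⟩, ⟨⟨d, hdD⟩, hdx, rfl⟩⟩
  have hne' : ∀ x : ℝ, (g '' {d : D | x < (d:ℝ)}).Nonempty := by
    intro x
    obtain ⟨d, hdD, hxd, _⟩ := hDd x (x+1) (by linarith)
    exact ⟨g ⟨d, hdD⟩, ⟨⟨d, hdD⟩, hxd, rfl⟩⟩
  have hbdd : ∀ x : ℝ, BddAbove (g '' {d : D | (d:ℝ) < x}) := by
    intro x; exact ⟨1, by rintro y ⟨d, _, rfl⟩; exact (hg01 d).2⟩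
  have hbdd' : ∀ x : ℝ, BddBelow (g '' {d : D | x < (d:ℝ)}) := by
    intro x; exact ⟨0, by rintro y ⟨d, _, rfl⟩; exact (hg01 d).1⟩
  set s : ℝ → ℝ := fun x => sSup (g '' {d : D | (d:ℝ) < x}) with hsdef
  set i : ℝ → ℝ := fun x => sInf (g '' {d : D | x < (d:ℝ)}) with hidef
  have hsi : ∀ x, s x ≤ i x := by
    intro x
    refine csSup_le (hne x) ?_
    rintro y ⟨d, hd, rfl⟩
    refine le_csInf (hne' x) ?_
    rintro z ⟨e, he, rfl⟩
    exact hgmono d e (le_of_lt (lt_trans hd he))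
  set q : ℝ → ℝ := fun x => if h : x ∈ D then g ⟨x, h⟩ else s x with hqdef
  have fact1 : ∀ (x : ℝ) (d : D), (d:ℝ) < x → g d ≤ q x := by
    intro x d hdx
    by_cases h : x ∈ D
    · rw [hqdef]; simp only [dif_pos h]; exact hgmono d ⟨x, h⟩ (le_of_lt hdx)
    · rw [hqdef]; simp only [dif_neg h]; exact le_csSup (hbdd x) ⟨d, hdx, rfl⟩
  have fact2 : ∀ (x : ℝ) (e : D), x ≤ (e:ℝ) → q x ≤ g e := by
    intro x e hxe
    by_cases h : x ∈ D
    · rw [hqdef]; simp only [dif_pos h]; exact hgmono ⟨x, h⟩ e hxe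
    · rw [hqdef]; simp only [dif_neg h]
      refine csSup_le (hne x) ?_
      rintro y ⟨d, hd, rfl⟩
      exact hgmono d e (le_of_lt (lt_of_lt_of_le hd hxe))
  have hqmono : Monotone q := by
    intro x y hxy
    rcases eq_or_lt_of_le hxy with rfl | hlt
    · exact le_rfl
    · obtain ⟨d, hdD, hxd, hdy⟩ := hDd x y hlt
      exact le_trans (fact2 x ⟨d, hdD⟩ (le_of_lt hxd)) (fact1 y ⟨d, hdD⟩ hdy)
  have hq01 : ∀ x, q x ∈ Icc (0:ℝ) 1 := by
    intro x
    constructor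
    · obtain ⟨d, hdD, _, hdx⟩ := hDd (x-1) x (by linarith)
      exact le_trans (hg01 ⟨d, hdD⟩).1 (fact1 x ⟨d, hdD⟩ hdx)
    · obtain ⟨d, hdD, hxd, _⟩ := hDd x (x+1) (by linarith)
      exact le_trans (fact2 x ⟨d, hdD⟩ (le_of_lt hxd)) (hg01 ⟨d, hdD⟩).2
  set E : Set ℝ := {x | x ∉ D ∧ s x < i x} with hEdef
  have hEc : E.Countable := by
    have hchoice : ∀ x ∈ E, ∃ r : ℚ, s x < (r:ℝ) ∧ (r:ℝ) < i x := by
      intro x hx; exact exists_rat_btwn hx.2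
    choose! r hr using hchoice
    have key : ∀ a b : ℝ, a ∈ E → b ∈ E → a < b → (r a : ℝ) < (r b : ℝ) := by
      intro a b ha hb hab
      obtain ⟨d, hdD, had, hdb⟩ := hDd a b hab
      have h1 : i a ≤ g ⟨d, hdD⟩ := csInf_le (hbdd' a) ⟨⟨d, hdD⟩, had, rfl⟩
      have h2 : g ⟨d, hdD⟩ ≤ s b := le_csSup (hbdd b) ⟨⟨d, hdD⟩, hdb, rfl⟩
      exact lt_of_lt_of_le (hr a ha).2 (le_trans (le_trans h1 h2) (le_of_lt (hr b hb).1))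
    have hinj : InjOn r E := by
      intro x hx y hy hxy
      by_contra hne2
      rcases lt_or_gt_of_ne hne2 with h | h
      · exact absurd (congrArg (fun z : ℚ => (z:ℝ)) hxy) (ne_of_lt (key x y hx hy h))
      · exact absurd (congrArg (fun z : ℚ => (z:ℝ)) hxy.symm) (ne_of_lt (key y x hy hx h))
    exact Set.countable_of_injective_of_countable_image hinj (Set.to_countable _)
  refine ⟨q, φ, E, hφ, hqmono, hq01, hEc, fun x hx => hx.1, ?_⟩
  intro x hxE
  by_cases hxD : x ∈ D
  · have : q x = g ⟨x, hxD⟩ := by rw [hqdef]; simp [dif_pos hxD]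
    rw [this]
    exact hGd ⟨x, hxD⟩
  · have hqx : q x = s x := by rw [hqdef]; simp [dif_neg hxD]
    have heq : i x = s x := by
      have : ¬ s x < i x := fun h => hxE ⟨hxD, h⟩
      exact le_antisymm (not_lt.1 this) (hsi x)
    rw [hqx]
    refine tendsto_order.2 ⟨?_, ?_⟩
    · intro a ha
      obtain ⟨y, ⟨d, hdx, rfl⟩, hay⟩ := exists_lt_of_lt_csSup (hne x) ha
      have hev : ∀ᶠ k in atTop, a < p (φ k) d := (hGd d).eventually_const_lt hay
      filter_upwards [hev] with k hk
      exact lt_of_lt_of_le hk (hm (φ k) (le_of_lt hdx))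
    · intro b hb2
      rw [← heq] at hb2
      obtain ⟨y, ⟨e, hxe, rfl⟩, hyb⟩ := exists_lt_of_csInf_lt (hne' x) hb2
      have hev : ∀ᶠ k in atTop, p (φ k) e < b := (hGd e).eventually_lt_const hyb
      filter_upwards [hev] with k hk
      exact lt_of_le_of_lt (hm (φ k) (le_of_lt hxe)) hk

/-- The set of moment vectors `(E p, E(xp), E(x²p))` over monotone
designs `p : ℝ → [0,1]` is closed and convex. -/
theorem stmt8 (μ : Measure ℝ) [IsProbabilityMeasure μ]
    (hint2 : Integrable (fun x : ℝ => x^2) μ) :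
    IsClosed {v : ℝ × ℝ × ℝ | ∃ p : ℝ → ℝ, Monotone p ∧ (∀ x, p x ∈ Icc (0:ℝ) 1) ∧
        v = (∫ x, p x ∂μ, ∫ x, x * p x ∂μ, ∫ x, x^2 * p x ∂μ)} ∧
    Convex ℝ {v : ℝ × ℝ × ℝ | ∃ p : ℝ → ℝ, Monotone p ∧ (∀ x, p x ∈ Icc (0:ℝ) 1) ∧
        v = (∫ x, p x ∂μ, ∫ x, x * p x ∂μ, ∫ x, x^2 * p x ∂μ)} := by
  constructor
  · -- closedness
    apply IsSeqClosed.isClosed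
    intro v L hv hL
    choose p hm hb hval using hv
    -- the countable set D : atoms ∪ rationals
    set A : Set ℝ := {x : ℝ | 0 < μ {x}} with hAdef
    have hAc : A.Countable := by
      have := MeasureTheory.Measure.countable_meas_pos_of_disjoint_iUnion (μ := μ)
        (As := fun x : ℝ => {x}) (fun x => measurableSet_singleton x)
        (fun x y hxy => by simpa [Function.onFun] using disjoint_singleton.2 hxy)
      exact this
    set D : Set ℝ := A ∪ Set.range ((↑) : ℚ → ℝ) with hDdef
    have hDc : D.Countable := hAc.union (countable_range _)
    have hDd : ∀ x y : ℝ, x < y → ∃ d ∈ D, x < d ∧ d < y := by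
      intro x y hxy
      obtain ⟨r, hr1, hr2⟩ := exists_rat_btwn hxy
      exact ⟨(r : ℝ), Or.inr ⟨r, rfl⟩, hr1, hr2⟩
    obtain ⟨q, φ, E, hφ, hqmono, hq01, hEc, hED, hconv⟩ :=
      stmt8_helly p hm (fun n x => hb n x) D hDc hDd
    -- E is null
    have hE0 : μ E = 0 := by
      have h1 : E = ⋃ x ∈ E, {x} := by simp
      rw [h1, measure_biUnion_null_iff hEc]
      intro x hx
      have : x ∉ A := fun hA => hED x hx (Or.inl hA)
      simpa [hAdef, not_lt, le_zero_iff] using this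
    have hae : ∀ᵐ x ∂μ, Tendsto (fun k => p (φ k) x) atTop (𝓝 (q x)) := by
      refine measure_mono_null ?_ hE0
      intro x hx
      simp only [mem_setOf_eq, mem_compl_iff] at hx ⊢
      by_contra hxE
      exact hx (hconv x hxE)
    -- dominated convergence for the three moments
    have hmeas : ∀ n, AEStronglyMeasurable (p n) μ :=
      fun n => (hm n).measurable.aestronglyMeasurable
    have habs : ∀ n x, |p n x| ≤ 1 :=
      fun n x => abs_le.2 ⟨by linarith [(hb n x).1], (hb n x).2⟩
    have h1 : Tendsto (fun k => ∫ x, p (φ k) x ∂μ) atTop (𝓝 (∫ x, q x ∂μ)) := by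
      refine tendsto_integral_of_dominated_convergence (fun _ => (1:ℝ))
        (fun k => hmeas (φ k)) (integrable_const 1) (fun k => ae_of_all _ fun x => habs _ x) hae
    have h2 : Tendsto (fun k => ∫ x, x * p (φ k) x ∂μ) atTop (𝓝 (∫ x, x * q x ∂μ)) := by
      refine tendsto_integral_of_dominated_convergence (fun x => 1 + x^2)
        (fun k => (measurable_id.mul (hm (φ k)).measurable).aestronglyMeasurable)
        ((integrable_const 1).add hint2)
        (fun k => ae_of_all _ fun x => ?_) ?_
      · have hxb : |x * p (φ k) x| ≤ |x| := by
          rw [abs_mul]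
          nlinarith [abs_nonneg x, habs (φ k) x, abs_nonneg (p (φ k) x)]
        have : |x| ≤ 1 + x^2 := by nlinarith [sq_abs x, sq_nonneg (|x| - 1)]
        exact le_trans hxb this
      · filter_upwards [hae] with x hx
        exact hx.const_mul x
    have h3 : Tendsto (fun k => ∫ x, x^2 * p (φ k) x ∂μ) atTop (𝓝 (∫ x, x^2 * q x ∂μ)) := by
      refine tendsto_integral_of_dominated_convergence (fun x => x^2)
        (fun k => ((measurable_id.pow_const 2).mul (hm (φ k)).measurable).aestronglyMeasurable)
        hint2 (fun k => ae_of_all _ fun x => ?_) ?_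
      · have : |x^2 * p (φ k) x| ≤ x^2 := by
          rw [abs_mul, abs_of_nonneg (sq_nonneg x)]
          nlinarith [sq_nonneg x, habs (φ k) x, abs_nonneg (p (φ k) x)]
        exact this
      · filter_upwards [hae] with x hx
        exact hx.const_mul (x^2)
    -- the subsequence of v converges to L
    have hvφ : Tendsto (fun k => v (φ k)) atTop (𝓝 L) := hL.comp hφ.tendsto_atTop
    have hL1 : Tendsto (fun k => (v (φ k)).1) atTop (𝓝 L.1) :=
      (continuous_fst.tendsto L).comp hvφ
    have hL2 : Tendsto (fun k => (v (φ k)).2.1) atTop (𝓝 L.2.1) :=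
      ((continuous_fst.comp continuous_snd).tendsto L).comp hvφ
    have hL3 : Tendsto (fun k => (v (φ k)).2.2) atTop (𝓝 L.2.2) :=
      ((continuous_snd.comp continuous_snd).tendsto L).comp hvφ
    have e1 : (fun k => (v (φ k)).1) = fun k => ∫ x, p (φ k) x ∂μ := by
      funext k; rw [hval (φ k)]
    have e2 : (fun k => (v (φ k)).2.1) = fun k => ∫ x, x * p (φ k) x ∂μ := by
      funext k; rw [hval (φ k)]
    have e3 : (fun k => (v (φ k)).2.2) = fun k => ∫ x, x^2 * p (φ k) x ∂μ := by
      funext k; rw [hval (φ k)]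
    rw [e1] at hL1; rw [e2] at hL2; rw [e3] at hL3
    refine ⟨q, hqmono, hq01, ?_⟩
    have := tendsto_nhds_unique hL1 h1
    have := tendsto_nhds_unique hL2 h2
    have := tendsto_nhds_unique hL3 h3
    ext <;> simp_all
  · -- convexity
    rintro v ⟨pv, hpvm, hpvb, rfl⟩ w ⟨pw, hpwm, hpwb, rfl⟩ a b ha hb hab
    obtain ⟨hv1, hv2, hv3⟩ := stmt8_int hint2 hpvm hpvb
    obtain ⟨hw1, hw2, hw3⟩ := stmt8_int hint2 hpwm hpwb
    refine ⟨fun x => a * pv x + b * pw x, ?_, ?_, ?_⟩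
    · intro x y hxy
      exact add_le_add (mul_le_mul_of_nonneg_left (hpvm hxy) ha)
        (mul_le_mul_of_nonneg_left (hpwm hxy) hb)
    · intro x
      constructor
      · exact add_nonneg (mul_nonneg ha (hpvb x).1) (mul_nonneg hb (hpwb x).1)
      · calc a * pv x + b * pw x ≤ a * 1 + b * 1 :=
              add_le_add (mul_le_mul_of_nonneg_left (hpvb x).2 ha)
                (mul_le_mul_of_nonneg_left (hpwb x).2 hb)
          _ = 1 := by rw [mul_one, mul_one, hab]
    · have i1 : ∫ x, (a * pv x + b * pw x) ∂μ = a * ∫ x, pv x ∂μ + b * ∫ x, pw x ∂μ := by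
        rw [integral_add (hv1.const_mul a) (hw1.const_mul b), integral_const_mul, integral_const_mul]
      have i2 : ∫ x, x * (a * pv x + b * pw x) ∂μ
          = a * ∫ x, x * pv x ∂μ + b * ∫ x, x * pw x ∂μ := by
        have : (fun x => x * (a * pv x + b * pw x))
            = fun x => a * (x * pv x) + b * (x * pw x) := by funext x; ring
        rw [this, integral_add (hv2.const_mul a) (hw2.const_mul b), integral_const_mul, integral_const_mul]
      have i3 : ∫ x, x^2 * (a * pv x + b * pw x) ∂μ
          = a * ∫ x, x^2 * pv x ∂μ + b * ∫ x, x^2 * pw x ∂μ := by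
        have : (fun x => x^2 * (a * pv x + b * pw x))
            = fun x => a * (x^2 * pv x) + b * (x^2 * pw x) := by funext x; ring
        rw [this, integral_add (hv3.const_mul a) (hw3.const_mul b), integral_const_mul, integral_const_mul]
      simp only [Prod.smul_mk, Prod.mk_add_mk, smul_eq_mul]
      rw [i1, i2, i3]
end

section
/- Let $x$ be a real random variable with finite second moment, let $r \le t$ be reals, and suppose $p^*:\mathbb{R}\to[0,1]$ is nondecreasing with $p^*(x)=1$ for almost all $x>t$ and $p^*(x)=\ell$ (a constant) for almost all $x<t$, where $\mathbb{E}((x-r)(x-t)\mathbf{1}(x<t))=0$. Then for every nondecreasing $q:\mathbb{R}\to[0,1]$, $\mathbb{E}(p^*(x)(x-r)(x-t)) \ge \mathbb{E}(q(x)(x-r)(x-t))$. -/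
/-!
Write `f x = (x - r) * (x - t)` and compare `pstar` with `q` on both sides of `t`.
Above `t`, `pstar = 1 ≥ q` while `f ≥ 0`. Below `t`, `pstar` is the constant `l` and
`∫ f = 0` there, so the constant `l` may be traded for the constant `q r` (the
undetermined multiplier); then `q r - q x` and `f x` have the same sign for every
`x < t` (both change sign at `r`), so the integrand is nonnegative.
-/

open MeasureTheory Set

lemma integrable_sub_mul_sub_of_integrable_sq {μ : Measure ℝ} [IsFiniteMeasure μ]
    (h : Integrable (fun x : ℝ => x ^ 2) μ) (r t : ℝ) :
    Integrable (fun x => (x - r) * (x - t)) μ := by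
  have hid : MemLp (fun x : ℝ => x) 2 μ :=
    (memLp_two_iff_integrable_sq measurable_id.aestronglyMeasurable).2 h
  exact (hid.sub (memLp_const r)).integrable_mul (hid.sub (memLp_const t))

lemma MeasureTheory.Integrable.monotone_mul {μ : Measure ℝ} {f g : ℝ → ℝ} (hf : Integrable f μ)
    (hg : Monotone g) (hg01 : ∀ x, g x ∈ Icc (0 : ℝ) 1) :
    Integrable (fun x => g x * f x) μ :=
  hf.bdd_mul hg.measurable.aestronglyMeasurable (c := 1) <| .of_forall fun x =>
    abs_le.2 ⟨by linarith [(hg01 x).1], (hg01 x).2⟩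

lemma integral_const_sub_mul_of_integral_eq_zero {α : Type*} [MeasurableSpace α]
    {ν : Measure α} {f g : α → ℝ} (hf : Integrable f ν)
    (hgf : Integrable (fun x => g x * f x) ν) (h0 : ∫ x, f x ∂ν = 0) (a : ℝ) :
    ∫ x, (a - g x) * f x ∂ν = -∫ x, g x * f x ∂ν := by
  simp_rw [sub_mul]
  rw [integral_sub (hf.const_mul a) hgf, integral_const_mul, h0, mul_zero, zero_sub]

lemma Monotone.sub_mul_sub_mul_sub_nonneg {q : ℝ → ℝ} (hq : Monotone q) {r t x : ℝ}
    (hx : x ≤ t) : 0 ≤ (q r - q x) * ((x - r) * (x - t)) := by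
  rcases le_total x r with hxr | hrx
  · exact mul_nonneg (sub_nonneg.2 (hq hxr))
      (mul_nonneg_of_nonpos_of_nonpos (by linarith) (by linarith))
  · exact mul_nonneg_of_nonpos_of_nonpos (sub_nonpos.2 (hq hrx))
      (mul_nonpos_of_nonneg_of_nonpos (by linarith) (by linarith))

section

variable {μ : Measure ℝ} {p q : ℝ → ℝ} {r t : ℝ}

lemma setIntegral_Ici_sub_mul_nonneg (hrt : r ≤ t) (hq1 : ∀ x, q x ≤ 1)
    (hup : ∀ᵐ x ∂μ, t < x → p x = 1) :
    0 ≤ ∫ x in Ici t, (p x - q x) * ((x - r) * (x - t)) ∂μ := by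
  refine setIntegral_nonneg_of_ae_restrict ?_
  filter_upwards [ae_restrict_mem measurableSet_Ici, ae_restrict_of_ae hup] with x hx hpx
  rcases (mem_Ici.1 hx).lt_or_eq with htx | rfl
  · rw [hpx htx]
    exact mul_nonneg (sub_nonneg.2 (hq1 x)) (mul_nonneg (by linarith) (by linarith))
  · simp

lemma setIntegral_Iio_sub_mul_nonneg {l : ℝ} (hq : Monotone q)
    (hf : Integrable (fun x => (x - r) * (x - t)) μ)
    (hqf : Integrable (fun x => q x * ((x - r) * (x - t))) μ)
    (hlow : ∀ᵐ x ∂μ, x < t → p x = l)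
    (hroot : ∫ x in Iio t, (x - r) * (x - t) ∂μ = 0) :
    0 ≤ ∫ x in Iio t, (p x - q x) * ((x - r) * (x - t)) ∂μ := by
  have hp : ∫ x in Iio t, (p x - q x) * ((x - r) * (x - t)) ∂μ
      = ∫ x in Iio t, (l - q x) * ((x - r) * (x - t)) ∂μ := by
    refine setIntegral_congr_ae measurableSet_Iio ?_
    filter_upwards [hlow] with x hx hxt
    rw [hx hxt]
  rw [hp, integral_const_sub_mul_of_integral_eq_zero hf.integrableOn hqf.integrableOn hroot,
    ← integral_const_sub_mul_of_integral_eq_zero hf.integrableOn hqf.integrableOn hroot (q r)]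
  exact setIntegral_nonneg measurableSet_Iio fun x hx =>
    hq.sub_mul_sub_mul_sub_nonneg (le_of_lt hx)

end

/-- Sufficiency (method of undetermined multipliers): the two-level
monotone design maximizes `E(q(x)(x-r)(x-t))` over monotone designs `q`. -/
theorem stmt9 (μ : Measure ℝ) [IsProbabilityMeasure μ]
    (hint2 : Integrable (fun x : ℝ => x^2) μ)
    (r t : ℝ) (hrt : r ≤ t) (l : ℝ)
    (pstar : ℝ → ℝ) (hmono : Monotone pstar) (h01 : ∀ x, pstar x ∈ Icc (0:ℝ) 1)
    (hup : ∀ᵐ x ∂μ, t < x → pstar x = 1)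
    (hlow : ∀ᵐ x ∂μ, x < t → pstar x = l)
    (hroot : ∫ x in Iio t, (x - r) * (x - t) ∂μ = 0) :
    ∀ q : ℝ → ℝ, Monotone q → (∀ x, q x ∈ Icc (0:ℝ) 1) →
      ∫ x, q x * ((x - r) * (x - t)) ∂μ ≤ ∫ x, pstar x * ((x - r) * (x - t)) ∂μ := by
  intro q hq hq01
  have hf := integrable_sub_mul_sub_of_integrable_sq hint2 r t
  have hpf := hf.monotone_mul hmono h01
  have hqf := hf.monotone_mul hq hq01
  have hsplit : ∀ x, (pstar x - q x) * ((x - r) * (x - t))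
      = pstar x * ((x - r) * (x - t)) - q x * ((x - r) * (x - t)) := fun x => sub_mul _ _ _
  have hdiff : Integrable (fun x => (pstar x - q x) * ((x - r) * (x - t))) μ :=
    (hpf.sub hqf).congr (.of_forall fun x => (hsplit x).symm)
  suffices 0 ≤ ∫ x, (pstar x - q x) * ((x - r) * (x - t)) ∂μ by
    rwa [integral_congr_ae (.of_forall hsplit), integral_sub hpf hqf, sub_nonneg] at this
  rw [← integral_add_compl measurableSet_Ici hdiff, compl_Ici]
  exact add_nonneg (setIntegral_Ici_sub_mul_nonneg hrt (fun x => (hq01 x).2) hup)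
    (setIntegral_Iio_sub_mul_nonneg hq hf hqf hlow hroot)
end

section
/- Let $x$ be a real random variable with finite mean and let $f:\mathbb{R}\to\mathbb{R}$ satisfy $\mathbb{E}|f(x)|<\infty$ and $\mathrm{sign}(f(x)) = \mathbf{1}(x<a) - \mathbf{1}(x>a)$ almost surely for some $a\in\mathbb{R}$. If a nondecreasing $p:\mathbb{R}\to[0,1]$ maximizes $\mathbb{E}(q(x)f(x))$ over all nondecreasing $q:\mathbb{R}\to[0,1]$, then $p(x)=p(a)$ almost surely. -/
open MeasureTheory Set

/-- If `f` is a.s. positive below `a`, negative above `a`, and zero at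
`a`, then any monotone design maximizing `E(q(x) f(x))` is a.s. constant equal to
its value at `a`. -/
theorem stmt10 (μ : Measure ℝ) [IsProbabilityMeasure μ]
    (hint1 : Integrable (fun x : ℝ => x) μ)
    (f : ℝ → ℝ) (hf : Integrable f μ)
    (a : ℝ)
    (hsign : ∀ᵐ x ∂μ, (x < a → 0 < f x) ∧ (a < x → f x < 0) ∧ (x = a → f x = 0))
    (p : ℝ → ℝ) (hmono : Monotone p) (h01 : ∀ x, p x ∈ Icc (0:ℝ) 1)
    (hmax : ∀ q : ℝ → ℝ, Monotone q → (∀ x, q x ∈ Icc (0:ℝ) 1) →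
      ∫ x, q x * f x ∂μ ≤ ∫ x, p x * f x ∂μ) :
    ∀ᵐ x ∂μ, p x = p a := by
  -- integrability of p x * f x
  have hpm : Measurable p := hmono.measurable
  have hpf : Integrable (fun x => p x * f x) μ := by
    refine hf.abs.mono' (hpm.aemeasurable.mul hf.aestronglyMeasurable.aemeasurable).aestronglyMeasurable ?_
    filter_upwards with x
    have h0 := (h01 x).1
    have h1 := (h01 x).2
    rw [Real.norm_eq_abs, abs_mul]
    calc |p x| * |f x| = p x * |f x| := by rw [abs_of_nonneg h0]
    _ ≤ 1 * |f x| := by apply mul_le_mul_of_nonneg_right h1 (abs_nonneg _)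
    _ = |f x| := one_mul _
  have hcf : Integrable (fun x => p a * f x) μ := hf.const_mul _
  -- pointwise a.e.: p x * f x ≤ p a * f x
  have hle : ∀ᵐ x ∂μ, p x * f x ≤ p a * f x := by
    filter_upwards [hsign] with x hx
    rcases lt_trichotomy x a with h | h | h
    · exact mul_le_mul_of_nonneg_right (hmono h.le) (hx.1 h).le
    · simp [h]
    · have := hx.2.1 h
      nlinarith [hmono h.le]
  -- maximizer: ∫ p a * f ≤ ∫ p * f
  have hge : ∫ x, p x * f x ∂μ ≤ ∫ x, p a * f x ∂μ := integral_mono_ae hpf hcf hle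
  have hmaxc := hmax (fun _ => p a) monotone_const (fun _ => h01 a)
  have heq : ∫ x, p a * f x ∂μ = ∫ x, p x * f x ∂μ := le_antisymm hmaxc hge
  -- the nonnegative gap has zero integral
  have hg : Integrable (fun x => p a * f x - p x * f x) μ := hcf.sub hpf
  have hnn : 0 ≤ᵐ[μ] fun x => p a * f x - p x * f x := by
    filter_upwards [hle] with x hx; simpa using hx
  have hzero : (fun x => p a * f x - p x * f x) =ᵐ[μ] 0 := by
    rw [← integral_eq_zero_iff_of_nonneg_ae hnn hg]
    rw [integral_sub hcf hpf, heq, sub_self]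
  filter_upwards [hsign, hzero] with x hx hz
  rcases lt_trichotomy x a with h | h | h
  · have hfx := hx.1 h
    have : p a * f x - p x * f x = 0 := hz
    have : (p a - p x) * f x = 0 := by ring_nf; linarith [this]
    rcases mul_eq_zero.mp this with h' | h'
    · linarith
    · linarith
  · simp [h]
  · have hfx := hx.2.1 h
    have : p a * f x - p x * f x = 0 := hz
    have : (p a - p x) * f x = 0 := by ring_nf; linarith [this]
    rcases mul_eq_zero.mp this with h' | h'
    · linarith
    · linarith
end

section
/- Let $x$ have mean $0$ and positive finite variance, and fix $\widetilde z\in(-1,1)$ and $\widetilde{xz}$ with $0<\widetilde{xz}<\widetilde{xz}_{\max}(\widetilde z)$. Suppose $p(x)=\ell\mathbf{1}(x<t)+\delta\mathbf{1}(x=t)+\mathbf{1}(x>t)$ and $p'(x)=\ell'\mathbf{1}(x<t)+\delta'\mathbf{1}(x=t)+\mathbf{1}(x>t)$ (same threshold $t$) both satisfy $\mathbb{E}(p(x))=\mathbb{E}(p'(x))$ and $\mathbb{E}(x\,p(x))=\mathbb{E}(x\,p'(x))$, with $\ell\le\delta\le1$ and $\ell'\le\delta'\le1$, $\ell,\ell'\in(0,1)$.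 Then $p=p'$ almost surely under the law of $x$. -/
/-!
The difference of two designs with threshold `t` is `(ℓ - ℓ') 1(x < t) + (δ - δ') 1(x = t)`.
Weighting it by `t - x` kills the atom at `t`, so equal first two moments give
`(ℓ - ℓ') E((t - x) 1(x < t)) = 0`, and that expectation is positive unless `{x < t}` is null.
Equal means then leave `(δ - δ') Pr(x = t) = 0`.
-/

open MeasureTheory Set

theorem integral_sub_mul_sub_eq_zero {μ : Measure ℝ} {f g : ℝ → ℝ} (hf : Integrable f μ)
    (hg : Integrable g μ) (hxf : Integrable (fun x => x * f x) μ)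
    (hxg : Integrable (fun x => x * g x) μ) (h0 : ∫ x, f x ∂μ = ∫ x, g x ∂μ)
    (h1 : ∫ x, x * f x ∂μ = ∫ x, x * g x ∂μ) (t : ℝ) :
    ∫ x, (t - x) * (f x - g x) ∂μ = 0 := by
  have hsplit : (fun x => (t - x) * (f x - g x)) =
      fun x => t * (f x - g x) - (x * f x - x * g x) := by
    funext x; ring
  rw [hsplit, integral_sub (f := fun x => t * (f x - g x)) (g := fun x => x * f x - x * g x)
      ((hf.sub hg).const_mul t) (hxf.sub hxg),
    integral_const_mul, integral_sub hf hg, integral_sub hxf hxg, h0, h1]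
  ring

theorem setIntegral_Iio_sub_pos {μ : Measure ℝ} {t : ℝ} (hμ : μ (Iio t) ≠ 0)
    (hint : IntegrableOn (fun x => t - x) (Iio t) μ) :
    0 < ∫ x in Iio t, (t - x) ∂μ := by
  have hnonneg : 0 ≤ᵐ[μ.restrict (Iio t)] fun x => t - x :=
    (ae_restrict_iff' measurableSet_Iio).2 (ae_of_all _ fun x hx => sub_nonneg.2 (le_of_lt hx))
  rw [setIntegral_pos_iff_support_of_nonneg_ae hnonneg hint]
  have hsupp : Function.support (fun x => t - x) ∩ Iio t = Iio t :=
    inter_eq_self_of_subset_right fun x hx => sub_ne_zero.2 (ne_of_gt hx)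
  rwa [hsupp, pos_iff_ne_zero]

noncomputable def stepDesign (t l d : ℝ) (x : ℝ) : ℝ :=
  if x < t then l else if x = t then d else 1

namespace stepDesign

variable {μ : Measure ℝ} {t l d l' d' : ℝ}

theorem measurable : Measurable (stepDesign t l d) :=
  Measurable.ite measurableSet_Iio measurable_const
    (Measurable.ite (measurableSet_singleton t) measurable_const measurable_const)

theorem norm_le (x : ℝ) : ‖stepDesign t l d x‖ ≤ |l| + |d| + 1 := by
  unfold stepDesign
  split_ifs <;> simp only [Real.norm_eq_abs, abs_one] <;> linarith [abs_nonneg l, abs_nonneg d]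

theorem integrable [IsFiniteMeasure μ] : Integrable (stepDesign t l d) μ :=
  .of_bound measurable.aestronglyMeasurable _ (ae_of_all _ norm_le)

theorem integrable_mul (hx : Integrable id μ) : Integrable (fun x => x * stepDesign t l d x) μ :=
  hx.mul_bdd measurable.aestronglyMeasurable (ae_of_all _ norm_le)

theorem sub_eq_indicator (x : ℝ) :
    stepDesign t l d x - stepDesign t l' d' x =
      (Iio t).indicator (fun _ => l - l') x + ({t} : Set ℝ).indicator (fun _ => d - d') x := by
  unfold stepDesign
  by_cases hlt : x < t
  · simp [hlt, hlt.ne]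
  · by_cases heq : x = t <;> simp [hlt, heq]

theorem sub_mul_sub_eq_indicator (x : ℝ) :
    (t - x) * (stepDesign t l d x - stepDesign t l' d' x) =
      (Iio t).indicator (fun x => (l - l') * (t - x)) x := by
  unfold stepDesign
  by_cases hlt : x < t
  · simp [hlt, mul_comm]
  · by_cases heq : x = t <;> simp [hlt, heq]

theorem integral_sub [IsFiniteMeasure μ] :
    ∫ x, (stepDesign t l d x - stepDesign t l' d' x) ∂μ =
      (l - l') * μ.real (Iio t) + (d - d') * μ.real {t} := by
  simp_rw [sub_eq_indicator]
  rw [integral_add ((integrable_const _).indicator measurableSet_Iio)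
      ((integrable_const _).indicator (measurableSet_singleton t)),
    integral_indicator_const _ measurableSet_Iio,
    integral_indicator_const _ (measurableSet_singleton t), smul_eq_mul, smul_eq_mul,
    mul_comm, mul_comm (μ.real _)]

theorem integral_sub_mul_sub :
    ∫ x, (t - x) * (stepDesign t l d x - stepDesign t l' d' x) ∂μ =
      (l - l') * ∫ x in Iio t, (t - x) ∂μ := by
  simp_rw [sub_mul_sub_eq_indicator]
  rw [integral_indicator measurableSet_Iio, integral_const_mul]

theorem ae_eq (hl : l = l' ∨ μ (Iio t) = 0) (hd : d = d' ∨ μ {t} = 0) :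
    stepDesign t l d =ᵐ[μ] stepDesign t l' d' := by
  have hlow : ∀ᵐ x ∂μ, x < t → l = l' := by
    rcases hl with rfl | hnull
    · exact ae_of_all _ fun _ _ => rfl
    · exact (measure_eq_zero_iff_ae_notMem.1 hnull).mono fun _ hx hlt => absurd hlt hx
  have hatom : ∀ᵐ x ∂μ, x = t → d = d' := by
    rcases hd with rfl | hnull
    · exact ae_of_all _ fun _ _ => rfl
    · exact (measure_eq_zero_iff_ae_notMem.1 hnull).mono fun _ hx heq => absurd heq hx
  filter_upwards [hlow, hatom] with x hlow hatom
  unfold stepDesign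
  split_ifs with hlt heq
  exacts [hlow hlt, hatom heq, rfl]

theorem ae_eq_of_integral_eq [IsFiniteMeasure μ] (hx : Integrable id μ)
    (h0 : ∫ x, stepDesign t l d x ∂μ = ∫ x, stepDesign t l' d' x ∂μ)
    (h1 : ∫ x, x * stepDesign t l d x ∂μ = ∫ x, x * stepDesign t l' d' x ∂μ) :
    stepDesign t l d =ᵐ[μ] stepDesign t l' d' := by
  have hlow : l = l' ∨ μ (Iio t) = 0 := by
    have h := integral_sub_mul_sub_eq_zero integrable integrable (integrable_mul hx)
      (integrable_mul hx) h0 h1 t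
    rw [integral_sub_mul_sub] at h
    by_contra! hne
    exact mul_ne_zero (sub_ne_zero.2 hne.1)
      (setIntegral_Iio_sub_pos hne.2 ((integrable_const t).sub hx).integrableOn).ne' h
  have hatom : d = d' ∨ μ {t} = 0 := by
    have h : ∫ x, (stepDesign t l d x - stepDesign t l' d' x) ∂μ = 0 := by
      rw [MeasureTheory.integral_sub integrable integrable, h0, sub_self]
    rw [stepDesign.integral_sub] at h
    have hlow0 : (l - l') * μ.real (Iio t) = 0 := by
      rcases hlow with rfl | hnull
      · rw [sub_self, zero_mul]
      · rw [measureReal_def, hnull, ENNReal.toReal_zero, mul_zero]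
    rw [hlow0, zero_add, mul_eq_zero, sub_eq_zero, measureReal_eq_zero_iff] at h
    exact h
  exact ae_eq hlow hatom

end stepDesign

theorem stmt11_general (μ : Measure ℝ) [IsProbabilityMeasure μ]
    (hint2 : Integrable (fun x : ℝ => x^2) μ)
    (zt xzt : ℝ)
    (t l d l' d' : ℝ)
    (p p' : ℝ → ℝ)
    (hpdef : p = fun x => if x < t then l else if x = t then d else 1)
    (hp'def : p' = fun x => if x < t then l' else if x = t then d' else 1)
    (hfrac : ∫ x, p x ∂μ = (1 + zt)/2) (hfrac' : ∫ x, p' x ∂μ = (1 + zt)/2)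
    (hgain : 2 * ∫ x, x * p x ∂μ = xzt) (hgain' : 2 * ∫ x, x * p' x ∂μ = xzt) :
    p =ᵐ[μ] p' := by
  have hx : Integrable id μ :=
    ((memLp_two_iff_integrable_sq measurable_id.aestronglyMeasurable).2 hint2).integrable
      one_le_two
  have hp : p = stepDesign t l d := hpdef
  have hp' : p' = stepDesign t l' d' := hp'def
  subst hp hp'
  exact stepDesign.ae_eq_of_integral_eq hx (hfrac.trans hfrac'.symm) (by linarith)

/-- Same-threshold uniqueness of the optimal monotone two-level design:
two feasible designs of the form `ℓ 1(x<t) + δ 1(x=t) + 1(x>t)` with the same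
threshold and the same first two moments coincide almost surely. -/
theorem stmt11 (μ : Measure ℝ) [IsProbabilityMeasure μ]
    (hmean : ∫ x, x ∂μ = 0)
    (hint2 : Integrable (fun x : ℝ => x^2) μ)
    (hvar : 0 < ∫ x, x^2 ∂μ)
    (zt xzt : ℝ) (hz : zt ∈ Ioo (-1:ℝ) 1)
    (hxzpos : 0 < xzt)
    (hxzmax : xzt < sSup {y : ℝ | ∃ q : ℝ → ℝ, Measurable q ∧
      (∀ x, q x ∈ Icc (0:ℝ) 1) ∧ ∫ x, q x ∂μ = (1 + zt)/2 ∧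
      y = 2 * ∫ x, x * q x ∂μ})
    (t l d l' d' : ℝ)
    (hl : l ∈ Ioo (0:ℝ) 1) (hl' : l' ∈ Ioo (0:ℝ) 1)
    (hld : l ≤ d) (hd1 : d ≤ 1) (hld' : l' ≤ d') (hd1' : d' ≤ 1)
    (p p' : ℝ → ℝ)
    (hpdef : p = fun x => if x < t then l else if x = t then d else 1)
    (hp'def : p' = fun x => if x < t then l' else if x = t then d' else 1)
    (hfrac : ∫ x, p x ∂μ = (1 + zt)/2) (hfrac' : ∫ x, p' x ∂μ = (1 + zt)/2)
    (hgain : 2 * ∫ x, x * p x ∂μ = xzt) (hgain' : 2 * ∫ x, x * p' x ∂μ = xzt) :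
    p =ᵐ[μ] p' :=
  stmt11_general μ hint2 zt xzt t l d l' d' p p' hpdef hp'def hfrac hfrac' hgain hgain'
end

section
/- With $M$ the $2\times2$ Schur complement of the expected information matrix for the two-line model, writing $\widetilde z = \mathbb{E}(z)$, $\widetilde{xz}=\mathbb{E}(xz)$, $s=\mathbb{E}(x^2)$ and $v=\mathbb{E}(x^2z)$, one has $\det(M) = -\frac{(1-\widetilde z^2)v^2}{s} - \frac{2\widetilde z(\widetilde{xz})^2 v}{s} + s(1-\widetilde z^2) + (\widetilde{xz})^2\Big(\frac{(\widetilde{xz})^2}{s} - 2\Big)$. In particular, as a function of $v$ with the other moments fixed, $\det(M)$ is a concave quadratic maximized at $v^* = -\widetilde z(\widetilde{xz})^2/(1-\widetilde z^2)$ (for $\widetilde z\in(-1,1)$). -/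
open Matrix Set

/-- Formula for `det M` as a function of `v = E(x²z)`, a concave
quadratic uniquely maximized at `v* = -z̃ (x̃z)²/(1-z̃²)`. -/
theorem stmt13 (s zt c : ℝ) (hs : 0 < s) (hz : zt ∈ Ioo (-1:ℝ) 1)
    (D : Matrix (Fin 2) (Fin 2) ℝ) (hD : D = !![1, 0; 0, s])
    (C : ℝ → Matrix (Fin 2) (Fin 2) ℝ) (hC : C = fun v => !![zt, c; c, v]) :
    (∀ v : ℝ, (D - C v * D⁻¹ * C v).det
        = -((1 - zt^2) * v^2)/s - (2*zt*c^2*v)/s + s*(1 - zt^2) + c^2*(c^2/s - 2)) ∧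
    (∀ v : ℝ, v ≠ -zt*c^2/(1 - zt^2) →
      (D - C v * D⁻¹ * C v).det
        < (D - C (-zt*c^2/(1 - zt^2)) * D⁻¹ * C (-zt*c^2/(1 - zt^2))).det) := by
  have hs' : s ≠ 0 := ne_of_gt hs
  have hDinv : D⁻¹ = !![1, 0; 0, s⁻¹] := by
    apply Matrix.inv_eq_right_inv
    subst hD
    rw [Matrix.mul_fin_two]
    norm_num [mul_inv_cancel₀ hs']
    exact Matrix.one_fin_two.symm
  have key : ∀ v : ℝ, (D - C v * D⁻¹ * C v).det
      = -((1 - zt^2) * v^2)/s - (2*zt*c^2*v)/s + s*(1 - zt^2) + c^2*(c^2/s - 2) := by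
    intro v
    subst hD hC
    rw [hDinv]
    simp only [Matrix.mul_fin_two]
    rw [Matrix.det_fin_two]
    simp [Matrix.sub_apply]
    field_simp
    ring
  refine ⟨key, fun v hv => ?_⟩
  rw [key, key]
  have hz2 : 0 < 1 - zt^2 := by
    obtain ⟨h1, h2⟩ := hz; nlinarith
  have hd : v * (1 - zt^2) + zt*c^2 ≠ 0 := by
    intro h
    apply hv
    field_simp
    linarith
  set w : ℝ := -zt*c^2/(1 - zt^2) with hw
  have hdiff : (-((1 - zt^2) * w^2)/s - (2*zt*c^2*w)/s + s*(1 - zt^2) + c^2*(c^2/s - 2))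
      - (-((1 - zt^2) * v^2)/s - (2*zt*c^2*v)/s + s*(1 - zt^2) + c^2*(c^2/s - 2))
      = (v * (1 - zt^2) + zt*c^2)^2 / ((1 - zt^2) * s) := by
    rw [hw]
    field_simp
    ring
  have hpos : 0 < (v * (1 - zt^2) + zt*c^2)^2 / ((1 - zt^2) * s) := by positivity
  linarith
end

section
/- Let $x \sim \mathbb{U}(-1,1)$. For $(\widetilde z,\widetilde{xz})$ feasible with $\widetilde z\in(-1,1)$ and $0\le\widetilde{xz}\le(1-\widetilde z^2)/2$, the two-level design $p(x)=\ell\mathbf{1}(x<t)+\mathbf{1}(x\ge t)$ with $t = 1 - 2\widetilde{xz}/(1-\widetilde z)$ and $\ell = \frac{1}{2}\cdot\frac{1-\widetilde z^2 - 2\widetilde{xz}}{1-\widetilde z-\widetilde{xz}}$ satisfies the constraints $2\mathbb{E}(p(x))-1 = \widetilde z$ and $2\mathbb{E}(x\,p(x)) = \widetilde{xz}$ (assuming the formula for $\ell$ yields $\ell\in[0,1]$ and $t\in[-1,1]$). -/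
/-!
Under the uniform law on `(-1, 1)` both constraints are integrals of a step function with a
single jump at `t`, so they split into the mass and first moment of `[-1, t]` and `[t, 1]`.
After substituting `t` and `ℓ` the two equations are rational identities in `z̃, x̃z`, whose
denominators `1 - z̃` and `1 - z̃ - x̃z` are positive because `x̃z ≤ (1 - z̃²)/2 < 1 - z̃`.
-/

open MeasureTheory Set

theorem integral_smul_restrict_Ioo {a b c : ℝ} (hab : a ≤ b) (hc : 0 ≤ c) (f : ℝ → ℝ) :
    ∫ x, f x ∂(ENNReal.ofReal c • volume.restrict (Ioo a b)) = c * ∫ x in a..b, f x := by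
  rw [integral_smul_measure, ENNReal.toReal_ofReal hc, intervalIntegral.integral_of_le hab,
    setIntegral_congr_set Ioo_ae_eq_Ioc, smul_eq_mul]

theorem intervalIntegral_ite_lt {a t b : ℝ} (hat : a ≤ t) (htb : t ≤ b) {f g : ℝ → ℝ}
    (hf : IntervalIntegrable f volume a t) (hg : IntervalIntegrable g volume t b) :
    ∫ x in a..b, (if x < t then f x else g x) = (∫ x in a..t, f x) + ∫ x in t..b, g x := by
  have hne : ∀ᵐ x ∂volume, x ≠ t := by simp [ae_iff]
  have left : ∀ᵐ x ∂volume, x ∈ uIoc a t → (if x < t then f x else g x) = f x := by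
    filter_upwards [hne] with x hxt hx
    rw [uIoc_of_le hat] at hx
    exact if_pos (hx.2.lt_of_ne hxt)
  have right : ∀ᵐ x ∂volume, x ∈ uIoc t b → (if x < t then f x else g x) = g x := by
    filter_upwards with x hx
    rw [uIoc_of_le htb] at hx
    exact if_neg hx.1.not_gt
  have hf' : (fun x => if x < t then f x else g x) =ᵐ[volume.restrict (uIoc a t)] f :=
    (ae_restrict_iff' measurableSet_uIoc).2 left
  have hg' : (fun x => if x < t then f x else g x) =ᵐ[volume.restrict (uIoc t b)] g :=
    (ae_restrict_iff' measurableSet_uIoc).2 right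
  rw [← intervalIntegral.integral_add_adjacent_intervals (hf.congr_ae hf'.symm)
      (hg.congr_ae hg'.symm),
    intervalIntegral.integral_congr_ae left, intervalIntegral.integral_congr_ae right]

theorem stmt14_general (μ : Measure ℝ)
    (hμ : μ = (ENNReal.ofReal (1/2)) • (volume.restrict (Ioo (-1:ℝ) 1)))
    (zt xzt : ℝ) (hz : zt ∈ Ioo (-1:ℝ) 1)
    (hxzmax : xzt ≤ (1 - zt^2)/2)
    (t l : ℝ)
    (htd : t = 1 - 2*xzt/(1 - zt))
    (hld : l = (1/2) * (1 - zt^2 - 2*xzt)/(1 - zt - xzt))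
    (ht11 : t ∈ Icc (-1:ℝ) 1)
    (p : ℝ → ℝ) (hp : p = fun x => if x < t then l else 1) :
    2 * ∫ x, p x ∂μ - 1 = zt ∧ 2 * ∫ x, x * p x ∂μ = xzt := by
  obtain ⟨hz1, hz2⟩ := hz
  have hzt : 0 < 1 - zt := by linarith
  have hden : 0 < 1 - zt - xzt := by nlinarith
  have mass : ∫ x in (-1:ℝ)..1, p x = l * (t + 1) + (1 - t) := by
    rw [hp, intervalIntegral_ite_lt ht11.1 ht11.2 intervalIntegrable_const
      intervalIntegrable_const]
    simp only [intervalIntegral.integral_const, smul_eq_mul]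
    ring
  have moment : ∫ x in (-1:ℝ)..1, x * p x = l * (t ^ 2 - 1) / 2 + (1 - t ^ 2) / 2 := by
    simp only [hp, mul_ite, mul_one]
    rw [intervalIntegral_ite_lt ht11.1 ht11.2 (intervalIntegral.intervalIntegrable_id.mul_const l)
      intervalIntegral.intervalIntegrable_id, intervalIntegral.integral_mul_const, integral_id,
      integral_id]
    ring
  rw [hμ, integral_smul_restrict_Ioo (by norm_num) (by norm_num),
    integral_smul_restrict_Ioo (by norm_num) (by norm_num), mass, moment, htd, hld]
  constructor <;> · field_simp; ring

/-- For `x ~ U(-1,1)`, the two-level design with the closed-form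
parameters `t = 1 - 2 x̃z/(1-z̃)` and `ℓ = (1/2)(1-z̃²-2x̃z)/(1-z̃-x̃z)` satisfies the
treated-fraction and short-term-gain constraints. -/
theorem stmt14 (μ : Measure ℝ)
    (hμ : μ = (ENNReal.ofReal (1/2)) • (volume.restrict (Ioo (-1:ℝ) 1)))
    (zt xzt : ℝ) (hz : zt ∈ Ioo (-1:ℝ) 1)
    (hxz0 : 0 ≤ xzt) (hxzmax : xzt ≤ (1 - zt^2)/2)
    (t l : ℝ)
    (htd : t = 1 - 2*xzt/(1 - zt))
    (hld : l = (1/2) * (1 - zt^2 - 2*xzt)/(1 - zt - xzt))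
    (hl01 : l ∈ Icc (0:ℝ) 1) (ht11 : t ∈ Icc (-1:ℝ) 1)
    (p : ℝ → ℝ) (hp : p = fun x => if x < t then l else 1) :
    2 * ∫ x, p x ∂μ - 1 = zt ∧ 2 * ∫ x, x * p x ∂μ = xzt :=
  stmt14_general μ hμ zt xzt hz hxzmax t l htd hld ht11 p hp
end

section
/- Let $x$ have mean $0$, positive finite variance, and a symmetric distribution. Fix $\widetilde z\in(-1,1)$ and suppose a measurable $p:\mathbb{R}\to[0,1]$ satisfies $\mathbb{E}(p(x))=(1+\widetilde z)/2$, $p(x)=\mathbf{1}(b_1<x<b_2)$ a.s. for some $b_1\le 0\le -b_1\le b_2$ (an interval design), and $\widetilde z<0$. Then $\mathbb{E}(x^2 p(x)) \le \mathbb{E}(x^2)/2$. -/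
open MeasureTheory Set

/-
Let S = (b₁, b₂). By symmetry S and -S carry the same mass and the same second moment, so
`2 ∫_S x² = ∫_{S ∪ -S} x² + ∫_{S ∩ -S} x²` and `μ (S ∪ -S) + μ (S ∩ -S) = 2 μ S ≤ 1`; hence
S ∩ -S = (b₁, -b₁) has no more mass than the complement of S ∪ -S. On the former `x² ≤ b₁²`,
on the latter, which misses S, `x ≤ b₁` or `x ≥ b₂ ≥ -b₁`, so `x² ≥ b₁²`. Therefore
`∫_{S ∩ -S} x² ≤ ∫_{(S ∪ -S)ᶜ} x²` and `2 ∫_S x² ≤ ∫ x²`.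
-/

section SetIntegral

variable {α : Type*} [MeasurableSpace α] {μ : Measure α}

theorem setIntegral_union_add_inter {E : Type*} [NormedAddCommGroup E] [NormedSpace ℝ E]
    {f : α → E} {s t : Set α} (ht : MeasurableSet t)
    (hf : IntegrableOn f (s ∪ t) μ) :
    ∫ x in s ∪ t, f x ∂μ + ∫ x in s ∩ t, f x ∂μ = ∫ x in s, f x ∂μ + ∫ x in t, f x ∂μ := by
  have hst : IntegrableOn f (s ∩ t) μ := hf.mono_set (inter_subset_left.trans subset_union_left)
  rw [← integral_add_measure hf hst, ← integral_add_measure (hf.mono_set subset_union_left)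
    (hf.mono_set subset_union_right), Measure.restrict_union_add_inter s ht]

theorem setIntegral_le_setIntegral_of_measureReal_le [IsFiniteMeasure μ] {f : α → ℝ}
    {s t : Set α} {c : ℝ} (hc : 0 ≤ c) (hs : MeasurableSet s) (ht : MeasurableSet t)
    (hfs : IntegrableOn f s μ) (hft : IntegrableOn f t μ) (hμ : μ.real s ≤ μ.real t)
    (hf_le : ∀ x ∈ s, f x ≤ c) (hf_ge : ∀ x ∈ t, c ≤ f x) :
    ∫ x in s, f x ∂μ ≤ ∫ x in t, f x ∂μ :=
  calc ∫ x in s, f x ∂μ ≤ ∫ _ in s, c ∂μ := setIntegral_mono_on hfs integrableOn_const hs hf_le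
    _ = μ.real s * c := by rw [setIntegral_const, smul_eq_mul]
    _ ≤ μ.real t * c := mul_le_mul_of_nonneg_right hμ hc
    _ = ∫ _ in t, c ∂μ := by rw [setIntegral_const, smul_eq_mul]
    _ ≤ ∫ x in t, f x ∂μ := setIntegral_mono_on integrableOn_const hft ht hf_ge

end SetIntegral

section NegInvariant

variable {G : Type*} [MeasurableSpace G] [InvolutiveNeg G] [MeasurableNeg G] {μ : Measure G}
  [μ.IsNegInvariant]

theorem setIntegral_neg_eq_of_even {E : Type*} [NormedAddCommGroup E] [NormedSpace ℝ E]
    {f : G → E} (hf : ∀ x, f (-x) = f x) (s : Set G) :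
    ∫ x in -s, f x ∂μ = ∫ x in s, f x ∂μ := by
  have h := (Measure.measurePreserving_neg μ).setIntegral_preimage_emb
    (MeasurableEquiv.neg G).measurableEmbedding f s
  simp only [hf] at h
  exact h

theorem measureReal_neg (s : Set G) : μ.real (-s) = μ.real s := by
  simp only [measureReal_def, Measure.measure_neg]

end NegInvariant

theorem setIntegral_sq_Ioo_le_half {μ : Measure ℝ} [IsProbabilityMeasure μ] [μ.IsNegInvariant]
    (hint : Integrable (fun x : ℝ => x ^ 2) μ) {b₁ b₂ : ℝ} (hb₁ : b₁ ≤ 0) (hb : -b₁ ≤ b₂)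
    (hS : μ.real (Ioo b₁ b₂) ≤ 1 / 2) :
    ∫ x in Ioo b₁ b₂, x ^ 2 ∂μ ≤ (∫ x, x ^ 2 ∂μ) / 2 := by
  set S := Ioo b₁ b₂
  set T := Ioo (-b₂) (-b₁)
  have hU : MeasurableSet (S ∪ T) := measurableSet_Ioo.union measurableSet_Ioo
  have h_moment : ∫ x in S ∪ T, x ^ 2 ∂μ + ∫ x in S ∩ T, x ^ 2 ∂μ = 2 * ∫ x in S, x ^ 2 ∂μ := by
    rw [setIntegral_union_add_inter measurableSet_Ioo hint.integrableOn, ← neg_Ioo,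
      setIntegral_neg_eq_of_even (f := fun x : ℝ => x ^ 2) neg_sq]
    ring
  have h_mass : μ.real (S ∪ T) + μ.real (S ∩ T) = 2 * μ.real S := by
    rw [measureReal_union_add_inter measurableSet_Ioo, ← neg_Ioo, measureReal_neg]
    ring
  have h_total := measureReal_add_measureReal_compl (μ := μ) hU
  rw [probReal_univ] at h_total
  have h_center_le_tails : ∫ x in S ∩ T, x ^ 2 ∂μ ≤ ∫ x in (S ∪ T)ᶜ, x ^ 2 ∂μ := by
    refine setIntegral_le_setIntegral_of_measureReal_le (sq_nonneg b₁)
      (measurableSet_Ioo.inter measurableSet_Ioo) hU.compl hint.integrableOn hint.integrableOn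
      (by linarith) ?_ ?_
    · rintro x ⟨⟨h₁, -⟩, -, h₂⟩
      nlinarith
    · intro x hx
      simp only [S, T, mem_compl_iff, mem_union, mem_Ioo, not_or, not_and_or, not_lt] at hx
      rcases hx.1 with hx | hx <;> nlinarith
  linarith [integral_add_compl hU hint]

theorem stmt17_general (μ : Measure ℝ) [IsProbabilityMeasure μ]
    (hsym : μ.map (fun x : ℝ => -x) = μ)
    (hint2 : Integrable (fun x : ℝ => x^2) μ)
    (zt : ℝ) (hzneg : zt < 0)
    (b1 b2 : ℝ) (hb1 : b1 ≤ 0) (hb : -b1 ≤ b2)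
    (p : ℝ → ℝ)
    (hfrac : ∫ x, p x ∂μ = (1 + zt)/2)
    (hind : ∀ᵐ x ∂μ, p x = if b1 < x ∧ x < b2 then 1 else 0) :
    ∫ x, x^2 * p x ∂μ ≤ (∫ x, x^2 ∂μ)/2 := by
  have : μ.IsNegInvariant := ⟨hsym⟩
  have hp : p =ᵐ[μ] (Ioo b1 b2).indicator 1 := by
    filter_upwards [hind] with x hx
    simp only [hx, indicator, mem_Ioo, Pi.one_apply]
  have hS : μ.real (Ioo b1 b2) ≤ 1 / 2 := by
    rw [← integral_indicator_one measurableSet_Ioo, ← integral_congr_ae hp, hfrac]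
    linarith
  calc ∫ x, x^2 * p x ∂μ = ∫ x in Ioo b1 b2, x^2 ∂μ := by
        rw [← integral_indicator measurableSet_Ioo]
        refine integral_congr_ae ?_
        filter_upwards [hp] with x hx
        simp only [hx, indicator, Pi.one_apply]
        split_ifs <;> simp
    _ ≤ (∫ x, x^2 ∂μ)/2 := setIntegral_sq_Ioo_le_half hint2 hb1 hb hS

/-- For a symmetric mean-zero distribution, `z̃ < 0`, and an interval
design `p = 1(b₁ < x < b₂)` with `b₁ ≤ 0 ≤ -b₁ ≤ b₂` and treated fraction
`(1+z̃)/2`, one has `E(x² p(x)) ≤ E(x²)/2`. -/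
theorem stmt17 (μ : Measure ℝ) [IsProbabilityMeasure μ]
    (hsym : μ.map (fun x : ℝ => -x) = μ)
    (hmean : ∫ x, x ∂μ = 0)
    (hint2 : Integrable (fun x : ℝ => x^2) μ)
    (hvar : 0 < ∫ x, x^2 ∂μ)
    (zt : ℝ) (hz : zt ∈ Ioo (-1:ℝ) 1) (hzneg : zt < 0)
    (b1 b2 : ℝ) (hb1 : b1 ≤ 0) (hb : -b1 ≤ b2)
    (p : ℝ → ℝ) (hm : Measurable p) (h01 : ∀ x, p x ∈ Icc (0:ℝ) 1)
    (hfrac : ∫ x, p x ∂μ = (1 + zt)/2)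
    (hind : ∀ᵐ x ∂μ, p x = if b1 < x ∧ x < b2 then 1 else 0) :
    ∫ x, x^2 * p x ∂μ ≤ (∫ x, x^2 ∂μ)/2 :=
  stmt17_general μ hsym hint2 zt hzneg b1 b2 hb1 hb p hfrac hind
end

section
/- Let $x$ have mean $0$ and finite variance, and let $p,q:\mathbb{R}\to[0,1]$ with $p(x)=\mathbf{1}(x>t)$ for $x\neq t$ (a generalized RDD) and $\mathbb{E}(p(x))=\mathbb{E}(q(x))$. Then $\mathbb{E}(x(p(x)-q(x))) \ge t\,\mathbb{E}(p(x)-q(x)) = 0$, with the inequality derived from $(x-t)(p(x)-q(x)) \ge 0$ pointwise for $x \neq t$. -/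
open MeasureTheory Set

/-- Core inequality for RDD optimality: if `p` is a generalized RDD
with threshold `t` and `E(p) = E(q)`, then
`E(x(p(x)-q(x))) ≥ t E(p(x)-q(x)) = 0`. -/
theorem stmt18 (μ : Measure ℝ) [IsProbabilityMeasure μ]
    (hmean : ∫ x, x ∂μ = 0)
    (hint2 : Integrable (fun x : ℝ => x^2) μ)
    (t : ℝ) (p q : ℝ → ℝ) (hpm : Measurable p) (hqm : Measurable q)
    (hp01 : ∀ x, p x ∈ Icc (0:ℝ) 1) (hq01 : ∀ x, q x ∈ Icc (0:ℝ) 1)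
    (hrdd : ∀ x ≠ t, p x = if t < x then 1 else 0)
    (heq : ∫ x, p x ∂μ = ∫ x, q x ∂μ) :
    t * ∫ x, (p x - q x) ∂μ ≤ ∫ x, x * (p x - q x) ∂μ ∧
    t * ∫ x, (p x - q x) ∂μ = 0 := by
  have hpi : Integrable p μ := by
    refine (integrable_const (1:ℝ)).mono' hpm.aestronglyMeasurable (ae_of_all _ fun x => ?_)
    have := hp01 x
    rw [Real.norm_eq_abs, abs_le]; constructor <;> linarith [this.1, this.2]
  have hqi : Integrable q μ := by
    refine (integrable_const (1:ℝ)).mono' hqm.aestronglyMeasurable (ae_of_all _ fun x => ?_)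
    have := hq01 x
    rw [Real.norm_eq_abs, abs_le]; constructor <;> linarith [this.1, this.2]
  have hxint : Integrable (fun x : ℝ => x) μ := by
    refine (hint2.add (integrable_const (1:ℝ))).mono'
      measurable_id.aestronglyMeasurable (ae_of_all _ fun x => ?_)
    simp only [id, Real.norm_eq_abs, Pi.add_apply]
    nlinarith [sq_nonneg (|x| - 1), abs_nonneg x, sq_abs x, le_abs_self x, neg_abs_le x]
  have hpq1 : ∀ x, |p x - q x| ≤ 1 := fun x => by
    have h1 := hp01 x; have h2 := hq01 x
    rw [abs_le]; constructor <;> linarith [h1.1, h1.2, h2.1, h2.2]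
  have hxi : Integrable (fun x : ℝ => x * (p x - q x)) μ := by
    refine hxint.abs.mono'
      (measurable_id.mul (hpm.sub hqm)).aestronglyMeasurable (ae_of_all _ fun x => ?_)
    rw [Real.norm_eq_abs, abs_mul]
    exact mul_le_of_le_one_right (abs_nonneg x) (hpq1 x)
  have hsub0 : ∫ x, (p x - q x) ∂μ = 0 := by
    rw [integral_sub hpi hqi, heq, sub_self]
  have hkey : 0 ≤ ∫ x, (x - t) * (p x - q x) ∂μ := by
    refine integral_nonneg fun x => ?_
    simp only [Pi.zero_apply]
    rcases lt_trichotomy x t with h | h | h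
    · have hp : p x = 0 := by rw [hrdd x h.ne]; simp [not_lt.mpr h.le]
      have := (hq01 x).1
      have hx : x - t ≤ 0 := by linarith
      have hpq : p x - q x ≤ 0 := by rw [hp]; linarith
      nlinarith [mul_nonneg (neg_nonneg.mpr hx) (neg_nonneg.mpr hpq)]
    · simp [h]
    · have hp : p x = 1 := by rw [hrdd x (by intro he; exact absurd he.symm h.ne)]; simp [h]
      have := (hq01 x).2
      have hx : 0 ≤ x - t := by linarith
      have hpq : 0 ≤ p x - q x := by rw [hp]; linarith
      exact mul_nonneg hx hpq
  have hpqi : Integrable (fun x => p x - q x) μ := hpi.sub hqi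
  have hdecomp : ∫ x, (x - t) * (p x - q x) ∂μ
      = ∫ x, x * (p x - q x) ∂μ - t * ∫ x, (p x - q x) ∂μ := by
    have : (fun x : ℝ => (x - t) * (p x - q x))
        = fun x => x * (p x - q x) - t * (p x - q x) := by
      funext x; ring
    rw [this, integral_sub hxi (hpqi.const_mul t), integral_const_mul]
  constructor
  · rw [hdecomp] at hkey; linarith
  · rw [hsub0, mul_zero]
end
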